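/- If F and G are color-invariant annotated functions from annotated values of type τ₁ to annotated values of type τ₂, and F(v) = G(v) for every distinctly-colored input v, then F = G on all annotated inputs. -/

import Mathlib

abbrev Color := ℕ

mutual
inductive RVal : Type where
  | int : ℤ → RVal
  | bool : Bool → RVal
  | pair : AVal → AVal → RVal
  | coll : List AVal → RVal
inductive AVal : Type where
  | ann : RVal → Set Color → AVal
end

inductive Val : Type where
  | int : ℤ → Val
  | bool : Bool → Val
  | pair : Val → Val → Val
  | coll : List Val → Val

mutual
def eraseA : AVal → Val
  | .ann w _ => eraseR w
def eraseR : RVal → Val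
  | .int i => .int i
  | .bool b => .bool b
  | .pair v₁ v₂ => .pair (eraseA v₁) (eraseA v₂)
  | .coll vs => .coll (eraseList vs)
def eraseList : List AVal → List Val
  | [] => []
  | v :: vs => eraseA v :: eraseList vs
end

mutual
def colorsA : AVal → Set Color
  | .ann w Φ => Φ ∪ colorsR w
def colorsR : RVal → Set Color
  | .int _ => ∅
  | .bool _ => ∅
  | .pair v₁ v₂ => colorsA v₁ ∪ colorsA v₂
  | .coll vs => colorsList vs
def colorsList : List AVal → Set Color
  | [] => ∅
  | v :: vs => colorsA v ∪ colorsList vs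
end

def substSet (α : Color → Set Color) (Φ : Set Color) : Set Color := ⋃ c ∈ Φ, α c

mutual
def substA (α : Color → Set Color) : AVal → AVal
  | .ann w Φ => .ann (substR α w) (substSet α Φ)
def substR (α : Color → Set Color) : RVal → RVal
  | .int i => .int i
  | .bool b => .bool b
  | .pair v₁ v₂ => .pair (substA α v₁) (substA α v₂)
  | .coll vs => .coll (substList α vs)
def substList (α : Color → Set Color) : List AVal → List AVal
  | [] => []
  | v :: vs => substA α v :: substList α vs
end

-- Distinctly-colored: every annotation a singleton, no color used twice.
mutual
def DistA : AVal → Prop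
  | .ann w Φ => (∃ c, Φ = {c}) ∧ Φ ∩ colorsR w = ∅ ∧ DistR w
def DistR : RVal → Prop
  | .int _ => True
  | .bool _ => True
  | .pair v₁ v₂ => DistA v₁ ∧ DistA v₂ ∧ colorsA v₁ ∩ colorsA v₂ = ∅
  | .coll vs => DistList vs
def DistList : List AVal → Prop
  | [] => True
  | v :: vs => DistA v ∧ DistList vs ∧ colorsA v ∩ colorsList vs = ∅
end

-- "Equal except at c"
mutual
inductive EqExA (c : Color) : AVal → AVal → Prop where
  | same : ∀ {w₁ w₂ : RVal} {Φ : Set Color}, EqExR c w₁ w₂ → EqExA c (.ann w₁ Φ) (.ann w₂ Φ)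
  | escape : ∀ {w₁ w₂ : RVal} {Φ₁ Φ₂ : Set Color}, c ∈ Φ₁ → c ∈ Φ₂ → EqExA c (.ann w₁ Φ₁) (.ann w₂ Φ₂)
inductive EqExR (c : Color) : RVal → RVal → Prop where
  | int : ∀ i : ℤ, EqExR c (.int i) (.int i)
  | bool : ∀ b : Bool, EqExR c (.bool b) (.bool b)
  | pair : ∀ {v₁ v₂ v₁' v₂' : AVal}, EqExA c v₁ v₁' → EqExA c v₂ v₂' → EqExR c (.pair v₁ v₂) (.pair v₁' v₂')
  | coll : ∀ {vs vs' : List AVal}, EqExL c vs vs' → EqExR c (.coll vs) (.coll vs')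
inductive EqExL (c : Color) : List AVal → List AVal → Prop where
  | nil : EqExL c [] []
  | cons : ∀ {v v' : AVal} {vs vs' : List AVal}, EqExA c v v' → EqExL c vs vs' → EqExL c (v :: vs) (v' :: vs')
end

inductive Ty : Type where
  | int : Ty
  | bool : Ty
  | pair : Ty → Ty → Ty
  | coll : Ty → Ty

inductive HasTy : Val → Ty → Prop where
  | int : ∀ i : ℤ, HasTy (.int i) .int
  | bool : ∀ b : Bool, HasTy (.bool b) .bool
  | pair : ∀ {v₁ v₂ t₁ t₂}, HasTy v₁ t₁ → HasTy v₂ t₂ → HasTy (.pair v₁ v₂) (.pair t₁ t₂)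
  | coll : ∀ {vs t}, (∀ v ∈ vs, HasTy v t) → HasTy (.coll vs) (.coll t)

/-- v is an annotated value of (ordinary) type τ. -/
def ATyped (v : AVal) (t : Ty) : Prop := HasTy (eraseA v) t

/-- Add an annotation set to the top-level annotation. -/
def addTop (v : AVal) (Φ : Set Color) : AVal :=
  match v with
  | .ann w Ψ => .ann w (Ψ ∪ Φ)

/- Annotated types -/
mutual
inductive ATy : Type where
  | ann : RTy → Set Color → ATy
inductive RTy : Type where
  | int : RTy
  | bool : RTy
  | pair : ATy → ATy → RTy
  | coll : ATy → RTy
end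

mutual
def teraseA : ATy → Ty
  | .ann w _ => teraseR w
def teraseR : RTy → Ty
  | .int => .int
  | .bool => .bool
  | .pair t₁ t₂ => .pair (teraseA t₁) (teraseA t₂)
  | .coll t => .coll (teraseA t)
end

mutual
def tcolorsA : ATy → Set Color
  | .ann w Φ => Φ ∪ tcolorsR w
def tcolorsR : RTy → Set Color
  | .int => ∅
  | .bool => ∅
  | .pair t₁ t₂ => tcolorsA t₁ ∪ tcolorsA t₂
  | .coll t => tcolorsA t
end

mutual
def mergeA : ATy → ATy → ATy
  | .ann w₁ Φ₁, .ann w₂ Φ₂ => .ann (mergeR w₁ w₂) (Φ₁ ∪ Φ₂)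
def mergeR : RTy → RTy → RTy
  | .int, .int => .int
  | .bool, .bool => .bool
  | .pair a b, .pair a' b' => .pair (mergeA a a') (mergeA b b')
  | .coll a, .coll a' => .coll (mergeA a a')
  | w, _ => w
end

-- Semantics of annotated types: v ∈ A[τ̂].
mutual
def memA : AVal → ATy → Prop
  | .ann w Ψ, .ann ω Φ => Ψ ⊆ Φ ∧ memR w ω
def memR : RVal → RTy → Prop
  | .int _, .int => True
  | .bool _, .bool => True
  | .pair v₁ v₂, .pair t₁ t₂ => memA v₁ t₁ ∧ memA v₂ t₂
  | .coll vs, .coll t => memList vs t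
  | _, _ => False
def memList : List AVal → ATy → Prop
  | [], _ => True
  | v :: vs, t => memA v t ∧ memList vs t
end


/-! Every annotated value is a substitution instance `α(d)` of a distinctly-colored value `d` with
the same erasure: give each annotation a fresh color and let `α` send that color back to the
annotation it replaced. A color-invariant function is therefore determined by its values on
distinctly-colored inputs, since `F v = F (α d) = α (F d)`. -/

open Set

theorem substSet_singleton (α : Color → Set Color) (c : Color) : substSet α {c} = α c := by
  simp [substSet]

theorem substSet_congr {α β : Color → Set Color} {Φ : Set Color} (h : EqOn α β Φ) :
    substSet α Φ = substSet β Φ :=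
  iUnion₂_congr h

mutual
theorem substA_congr {α β : Color → Set Color} :
    ∀ v : AVal, EqOn α β (colorsA v) → substA α v = substA β v
  | .ann w Φ, h => by
    rw [colorsA] at h
    rw [substA, substA, substR_congr w (h.mono subset_union_right),
      substSet_congr (h.mono subset_union_left)]
theorem substR_congr {α β : Color → Set Color} :
    ∀ w : RVal, EqOn α β (colorsR w) → substR α w = substR β w
  | .int _, _ => rfl
  | .bool _, _ => rfl
  | .pair v₁ v₂, h => by
    rw [colorsR] at h
    rw [substR, substR, substA_congr v₁ (h.mono subset_union_left),
      substA_congr v₂ (h.mono subset_union_right)]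
  | .coll vs, h => by
    rw [substR, substR, substList_congr vs h]
theorem substList_congr {α β : Color → Set Color} :
    ∀ vs : List AVal, EqOn α β (colorsList vs) → substList α vs = substList β vs
  | [], _ => rfl
  | v :: vs, h => by
    rw [colorsList] at h
    rw [substList, substList, substA_congr v (h.mono subset_union_left),
      substList_congr vs (h.mono subset_union_right)]
end

section ColorRanges

variable {s t : Set Color} {n m₁ m₂ : ℕ}

theorem inter_eq_empty_of_subset_Ico (hs : s ⊆ Ico n m₁) (ht : t ⊆ Ico m₁ m₂) : s ∩ t = ∅ :=
  disjoint_iff_inter_eq_empty.mp (Ico_disjoint_Ico_same.mono hs ht)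

theorem union_subset_Ico (hs : s ⊆ Ico n m₁) (ht : t ⊆ Ico m₁ m₂) (hn : n ≤ m₁) (hm : m₁ ≤ m₂) :
    s ∪ t ⊆ Ico n m₂ :=
  Ico_union_Ico_eq_Ico hn hm ▸ union_subset_union hs ht

theorem eqOn_piecewise_Iio_left (α₁ α₂ : Color → Set Color) (hs : s ⊆ Ico n m₁) :
    EqOn ((Iio m₁).piecewise α₁ α₂) α₁ s :=
  (piecewise_eqOn _ _ _).mono (hs.trans Ico_subset_Iio_self)

theorem eqOn_piecewise_Iio_right (α₁ α₂ : Color → Set Color) (ht : t ⊆ Ico m₁ m₂) :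
    EqOn ((Iio m₁).piecewise α₁ α₂) α₂ t :=
  (piecewise_eqOn_compl _ _ _).mono fun _ hc => not_lt.mpr (ht hc).1

end ColorRanges

/- The colors of the distinctly-colored value are drawn from `[n, m)`, so that the values built
for the components of a pair or a list use disjoint ranges of colors. -/
mutual
theorem exists_distA_substA_eq_of_colorsA_subset_Ico :
    ∀ (v : AVal) (n : ℕ), ∃ (d : AVal) (m : ℕ) (α : Color → Set Color), n ≤ m ∧
      colorsA d ⊆ Ico n m ∧ DistA d ∧ eraseA d = eraseA v ∧ substA α d = v
  | .ann w Φ, n => by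
    obtain ⟨dw, m, α, hnm, hcol, hdist, herase, hsubst⟩ :=
      exists_distR_substR_eq_of_colorsR_subset_Ico w (n + 1)
    have hfresh : n ∉ colorsR dw := fun h => (hcol h).1.not_gt n.lt_succ_self
    refine ⟨.ann dw {n}, m, Function.update α n Φ, by omega, ?_, ⟨⟨n, rfl⟩, ?_, hdist⟩, herase, ?_⟩
    · rw [colorsA]
      refine union_subset ?_ (hcol.trans (Ico_subset_Ico_left n.le_succ))
      simpa using hnm
    · simpa using hfresh
    · have hα : EqOn (Function.update α n Φ) α (colorsR dw) := fun c hc =>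
        Function.update_of_ne (ne_of_mem_of_not_mem hc hfresh) _ _
      rw [substA, substR_congr dw hα, hsubst, substSet_singleton, Function.update_self]
theorem exists_distR_substR_eq_of_colorsR_subset_Ico :
    ∀ (w : RVal) (n : ℕ), ∃ (d : RVal) (m : ℕ) (α : Color → Set Color), n ≤ m ∧
      colorsR d ⊆ Ico n m ∧ DistR d ∧ eraseR d = eraseR w ∧ substR α d = w
  | .int i, n => ⟨.int i, n, fun _ => ∅, le_rfl, by simp [colorsR], trivial, rfl, rfl⟩
  | .bool b, n => ⟨.bool b, n, fun _ => ∅, le_rfl, by simp [colorsR], trivial, rfl, rfl⟩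
  | .pair v₁ v₂, n => by
    obtain ⟨d₁, m₁, α₁, hnm₁, hcol₁, hdist₁, herase₁, hsubst₁⟩ :=
      exists_distA_substA_eq_of_colorsA_subset_Ico v₁ n
    obtain ⟨d₂, m₂, α₂, hm₁₂, hcol₂, hdist₂, herase₂, hsubst₂⟩ :=
      exists_distA_substA_eq_of_colorsA_subset_Ico v₂ m₁
    refine ⟨.pair d₁ d₂, m₂, (Iio m₁).piecewise α₁ α₂, hnm₁.trans hm₁₂,
      union_subset_Ico hcol₁ hcol₂ hnm₁ hm₁₂,
      ⟨hdist₁, hdist₂, inter_eq_empty_of_subset_Ico hcol₁ hcol₂⟩,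
      by rw [eraseR, eraseR, herase₁, herase₂], ?_⟩
    rw [substR, substA_congr d₁ (eqOn_piecewise_Iio_left α₁ α₂ hcol₁),
      substA_congr d₂ (eqOn_piecewise_Iio_right α₁ α₂ hcol₂), hsubst₁, hsubst₂]
  | .coll vs, n => by
    obtain ⟨ds, m, α, hnm, hcol, hdist, herase, hsubst⟩ :=
      exists_distList_substList_eq_of_colorsList_subset_Ico vs n
    exact ⟨.coll ds, m, α, hnm, hcol, hdist, by rw [eraseR, eraseR, herase],
      by rw [substR, hsubst]⟩
theorem exists_distList_substList_eq_of_colorsList_subset_Ico :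
    ∀ (vs : List AVal) (n : ℕ), ∃ (ds : List AVal) (m : ℕ) (α : Color → Set Color), n ≤ m ∧
      colorsList ds ⊆ Ico n m ∧ DistList ds ∧ eraseList ds = eraseList vs ∧ substList α ds = vs
  | [], n => ⟨[], n, fun _ => ∅, le_rfl, by simp [colorsList], trivial, rfl, rfl⟩
  | v :: vs, n => by
    obtain ⟨d₁, m₁, α₁, hnm₁, hcol₁, hdist₁, herase₁, hsubst₁⟩ :=
      exists_distA_substA_eq_of_colorsA_subset_Ico v n
    obtain ⟨d₂, m₂, α₂, hm₁₂, hcol₂, hdist₂, herase₂, hsubst₂⟩ :=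
      exists_distList_substList_eq_of_colorsList_subset_Ico vs m₁
    refine ⟨d₁ :: d₂, m₂, (Iio m₁).piecewise α₁ α₂, hnm₁.trans hm₁₂,
      union_subset_Ico hcol₁ hcol₂ hnm₁ hm₁₂,
      ⟨hdist₁, hdist₂, inter_eq_empty_of_subset_Ico hcol₁ hcol₂⟩,
      by rw [eraseList, eraseList, herase₁, herase₂], ?_⟩
    rw [substList, substA_congr d₁ (eqOn_piecewise_Iio_left α₁ α₂ hcol₁),
      substList_congr d₂ (eqOn_piecewise_Iio_right α₁ α₂ hcol₂), hsubst₁, hsubst₂]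
end

theorem exists_distA_substA_eq (v : AVal) :
    ∃ (d : AVal) (α : Color → Set Color), DistA d ∧ eraseA d = eraseA v ∧ substA α d = v :=
  let ⟨d, _, α, _, _, hd⟩ := exists_distA_substA_eq_of_colorsA_subset_Ico v 0
  ⟨d, α, hd⟩

theorem colorInvariant_eq_of_eq_on_distinct (τ₁ τ₂ : Ty) (F G : AVal → AVal)
    (hFty : ∀ v, ATyped v τ₁ → ATyped (F v) τ₂)
    (hGty : ∀ v, ATyped v τ₁ → ATyped (G v) τ₂)
    (hFinv : ∀ (α : Color → Set Color) (v : AVal), substA α (F v) = F (substA α v))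
    (hGinv : ∀ (α : Color → Set Color) (v : AVal), substA α (G v) = G (substA α v))
    (hagree : ∀ v, ATyped v τ₁ → DistA v → F v = G v) :
    ∀ v, ATyped v τ₁ → F v = G v := by
  intro v hv
  obtain ⟨d, α, hd, herase, rfl⟩ := exists_distA_substA_eq v
  have hdτ : ATyped d τ₁ := by rwa [ATyped, herase]
  rw [← hFinv, ← hGinv, hagree d hdτ hd]
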